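/- Let G be an irreducible Artin–Tits group of spherical type, x_G the special element with λ its axis projection, v a vertex of 𝒞_AL(G) and λ₀ = λ(v). Then: (a) for every j ≥ 1, x_G^j is a prefix of the distinguished representative of x_G^{−λ₀+j} · v; (b) for every j ≥ 2, (∂x_G)^{j−1} is a prefix of the distinguished representative of x_G^{−λ₀−j} · v. -/

import Mathlib

/-- A finite-type Garside structure on a group `G`. -/
structure GarsideStructure (G : Type*) [Group G] where
  /-- the submonoid of positive elements -/
  P : Submonoid G
  /-- the Garside element -/
  Δ : G
  delta_pos : Δ ∈ P
  pos_antisymm : ∀ x : G, x ∈ P → x⁻¹ ∈ P → x = 1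
  /-- gcd for the prefix order -/
  wedge : G → G → G
  /-- lcm for the prefix order -/
  vee : G → G → G
  wedge_le_left : ∀ x y, (wedge x y)⁻¹ * x ∈ P
  wedge_le_right : ∀ x y, (wedge x y)⁻¹ * y ∈ P
  le_wedge : ∀ x y z, z⁻¹ * x ∈ P → z⁻¹ * y ∈ P → z⁻¹ * wedge x y ∈ P
  left_le_vee : ∀ x y, x⁻¹ * vee x y ∈ P
  right_le_vee : ∀ x y, y⁻¹ * vee x y ∈ P
  vee_le : ∀ x y z, x⁻¹ * z ∈ P → y⁻¹ * z ∈ P → (vee x y)⁻¹ * z ∈ P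
  /-- gcd for the suffix order -/
  rwedge : G → G → G
  /-- lcm for the suffix order -/
  rvee : G → G → G
  rwedge_le_left : ∀ x y, x * (rwedge x y)⁻¹ ∈ P
  rwedge_le_right : ∀ x y, y * (rwedge x y)⁻¹ ∈ P
  le_rwedge : ∀ x y z, x * z⁻¹ ∈ P → y * z⁻¹ ∈ P → rwedge x y * z⁻¹ ∈ P
  left_le_rvee : ∀ x y, rvee x y * x⁻¹ ∈ P
  right_le_rvee : ∀ x y, rvee x y * y⁻¹ ∈ P
  rvee_le : ∀ x y z, z * x⁻¹ ∈ P → z * y⁻¹ ∈ P → z * (rvee x y)⁻¹ ∈ P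
  /-- the set of simple elements is finite -/
  simples_finite : {s : G | s ∈ P ∧ s⁻¹ * Δ ∈ P}.Finite
  /-- the simple elements generate the group -/
  simples_generate : Subgroup.closure {s : G | s ∈ P ∧ s⁻¹ * Δ ∈ P} = ⊤
  /-- conjugation by `Δ` preserves `P` -/
  conj_delta : ∀ x : G, x ∈ P ↔ Δ⁻¹ * x * Δ ∈ P
  /-- `P` is noetherian -/
  noetherian : ∀ x ∈ P, x ≠ 1 →
    ∃ N : ℕ, ∀ l : List G, (∀ a ∈ l, a ∈ P ∧ a ≠ 1) → l.prod = x → l.length ≤ N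

namespace GarsideStructure

variable {G : Type*} [Group G] (g : GarsideStructure G)

/-- the prefix order -/
def le (x y : G) : Prop := x⁻¹ * y ∈ g.P

/-- the suffix order: `rle x y` means `x ≽ y`, i.e. `y` is a suffix of `x` -/
def rle (x y : G) : Prop := x * y⁻¹ ∈ g.P

/-- `IsInf x k` : `k` is the infimum of `x`, `max {j : Δ^j ≼ x}` -/
def IsInf (x : G) (k : ℤ) : Prop := g.le (g.Δ ^ k) x ∧ ∀ j : ℤ, g.le (g.Δ ^ j) x → j ≤ k

/-- `IsSup x k` : `k` is the supremum of `x`, `min {j : x ≼ Δ^j}` -/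
def IsSup (x : G) (k : ℤ) : Prop := g.le x (g.Δ ^ k) ∧ ∀ j : ℤ, g.le x (g.Δ ^ j) → k ≤ j

/-- an element of a Garside group is absorbable -/
def Absorbable (y : G) : Prop :=
  (g.IsInf y 0 ∨ g.IsSup y 0) ∧
  ∃ (x : G) (i s : ℤ), g.IsInf x i ∧ g.IsSup x s ∧ g.IsInf (x * y) i ∧ g.IsSup (x * y) s

/-- simple elements: positive prefixes of `Δ` -/
def Simple (s : G) : Prop := s ∈ g.P ∧ g.le s g.Δ

/-- atoms: minimal nontrivial positive elements -/
def Atom (a : G) : Prop := a ∈ g.P ∧ a ≠ 1 ∧ ∀ u v : G, u ∈ g.P → v ∈ g.P → u * v = a → u = 1 ∨ v = 1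

/-- `(s,t)` is left-weighted: `∂s ∧ t = 1` -/
def LeftWeighted (s t : G) : Prop :=
  g.Simple s ∧ g.Simple t ∧ g.wedge (s⁻¹ * g.Δ) t = 1

/-- `(s,t)` is right-weighted: `s ∧^Lsh ∂⁻¹t = 1` -/
def RightWeighted (s t : G) : Prop :=
  g.Simple s ∧ g.Simple t ∧ g.rwedge s (g.Δ * t⁻¹) = 1

/-- `l` is the left normal form (of the element `l.prod`, which has infimum `0`) -/
def IsLNF (l : List G) : Prop :=
  (∀ s ∈ l, g.Simple s ∧ s ≠ 1) ∧ l.Chain' g.LeftWeighted ∧ ∀ h ∈ l.head?, h ≠ g.Δ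

/-- `l` is the right normal form, written in product order (`u = s'_r ⋯ s'_1` corresponds
to the list `[s'_r, …, s'_1]`); the last pair condition says `s'_1 ≠ Δ`. -/
def IsRNF (l : List G) : Prop :=
  (∀ s ∈ l, g.Simple s ∧ s ≠ 1) ∧ l.Chain' g.RightWeighted ∧ ∀ h ∈ l.getLast?, h ≠ g.Δ

/-- the vertex set of the additional length graph: left cosets `gΔ^ℤ` -/
abbrev ALVertex := G ⧸ Subgroup.zpowers g.Δ

/-- one coset can be reached from the other by multiplying the distinguished
representative by a nontrivial proper simple element or by an absorbable element -/
def ALStep (v w : G ⧸ Subgroup.zpowers g.Δ) : Prop :=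
  ∃ d : G, g.IsInf d 0 ∧ (d : G ⧸ Subgroup.zpowers g.Δ) = v ∧
    ((∃ s : G, g.Simple s ∧ s ≠ 1 ∧ s ≠ g.Δ ∧ ((d * s : G) : G ⧸ Subgroup.zpowers g.Δ) = w) ∨
     (∃ y : G, g.Absorbable y ∧ ((d * y : G) : G ⧸ Subgroup.zpowers g.Δ) = w))

/-- the additional length graph -/
def ALGraph : SimpleGraph (G ⧸ Subgroup.zpowers g.Δ) where
  Adj v w := v ≠ w ∧ (g.ALStep v w ∨ g.ALStep w v)
  symm := by constructor; intro v w h; exact ⟨Ne.symm h.1, h.2.symm⟩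
  loopless := by constructor; intro v h; exact h.1 rfl

end GarsideStructure

section Artin

/-- the alternating word `iji⋯` of length `m` in the free group -/
def braidWord {B : Type*} (i j : B) : ℕ → FreeGroup B
  | 0 => 1
  | n + 1 => FreeGroup.of i * braidWord j i n

/-- the braid relations associated to a Coxeter matrix -/
def artinRelationsSet {B : Type*} (M : CoxeterMatrix B) : Set (FreeGroup B) :=
  {r | ∃ i j : B, i ≠ j ∧ r = braidWord i j (M i j) * (braidWord j i (M i j))⁻¹}

/-- the Artin–Tits group associated to a Coxeter matrix -/
abbrev ArtinGroup {B : Type*} (M : CoxeterMatrix B) : Type _ :=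
  PresentedGroup (artinRelationsSet M)

/-- the Coxeter diagram: vertices are the generators, edges join `i ≠ j` with `m_{ij} ≥ 3`
(where `0` encodes `∞`) -/
def coxeterDiagram {B : Type*} (M : CoxeterMatrix B) : SimpleGraph B where
  Adj i j := i ≠ j ∧ M i j ≠ 2
  symm := by constructor; intro i j h; exact ⟨h.1.symm, by rw [M.symmetric]; exact h.2⟩
  loopless := by constructor; intro i h; exact h.1 rfl

/-- an Artin–Tits group is irreducible if its Coxeter diagram is connected -/
def CoxeterMatrix.IsIrreducible {B : Type*} (M : CoxeterMatrix B) : Prop :=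
  (coxeterDiagram M).Connected

/-- an Artin–Tits group is of spherical type if the associated Coxeter group is finite -/
def CoxeterMatrix.IsSpherical {B : Type*} (M : CoxeterMatrix B) : Prop :=
  Finite M.Group

/-- the Coxeter diagram has at least one edge (this excludes free abelian groups) -/
def CoxeterMatrix.HasEdge {B : Type*} (M : CoxeterMatrix B) : Prop :=
  ∃ i j : B, i ≠ j ∧ 3 ≤ M i j

/-- `gs` is the classical Garside structure on the Artin–Tits group of `M`: the positive
monoid is generated by the standard generators, and `Δ` is their least common multiple
with respect to the prefix order. -/
structure IsClassicalGarside {B : Type*} (M : CoxeterMatrix B)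
    (gs : GarsideStructure (ArtinGroup M)) : Prop where
  pos_eq : gs.P = Submonoid.closure (Set.range fun i => (PresentedGroup.of i : ArtinGroup M))
  le_delta : ∀ i : B, gs.le (PresentedGroup.of i) gs.Δ
  delta_min : ∀ d : ArtinGroup M, d ∈ gs.P →
    (∀ i : B, gs.le (PresentedGroup.of i) d) → gs.le gs.Δ d

/-- the special element `x_G` of Proposition (Lox), together with its normal form data -/
structure GarsideStructure.SpecialElement {G : Type*} [Group G] (g : GarsideStructure G) where
  /-- the element itself -/
  x : G
  /-- the atom appearing as first and last normal form factor -/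
  a : G
  /-- the atom whose complements appear as consecutive factors -/
  b : G
  /-- the common left and right normal form of `x` -/
  l : List G
  inf_zero : g.IsInf x 0
  atom_a : g.Atom a
  atom_b : g.Atom b
  lnf : g.IsLNF l
  rnf : g.IsRNF l
  prod_eq : l.prod = x
  nonempty : l ≠ []
  head_a : l.head? = some a
  last_a : l.getLast? = some a
  /-- the first and last factors are the only ones consisting of a single atom -/
  interior_not_atom : ∀ s ∈ (l.drop 1).dropLast, ¬ g.Atom s
  /-- rigidity: the pair `(φ(x), ι(x)) = (a, a)` is left-weighted -/
  rigid : g.LeftWeighted a a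
  /-- two consecutive factors are `b⁻¹Δ` and `τ(b⁻¹)Δ` -/
  consecutive : ∃ l₁ l₂ : List G,
    l = l₁ ++ [b⁻¹ * g.Δ, (g.Δ⁻¹ * b⁻¹ * g.Δ) * g.Δ] ++ l₂
  /-- `sup(x)` is a multiple of `o(G)`, i.e. `Δ^{sup x}` is central -/
  delta_pow_central : g.Δ ^ (l.length : ℤ) ∈ Subgroup.center G

/-- `lam` is the projection `λ(v) = −max{k : x ⋠ ` distinguished rep of `x^k·v}` of the
vertex `v` to the axis of `x`. -/
def GarsideStructure.IsAxisProj {G : Type*} [Group G] (g : GarsideStructure G) (x : G)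
    (v : G ⧸ Subgroup.zpowers g.Δ) (lam : ℤ) : Prop :=
  (∃ d : G, g.IsInf d 0 ∧ (d : G ⧸ Subgroup.zpowers g.Δ) = x ^ (-lam) • v ∧ ¬ g.le x d) ∧
  ∀ k : ℤ, (∃ d : G, g.IsInf d 0 ∧ (d : G ⧸ Subgroup.zpowers g.Δ) = x ^ k • v ∧ ¬ g.le x d) →
    k ≤ -lam

/-- the vertices of the preferred path starting at the vertex of `d`, with edge labels `L` -/
def GarsideStructure.pathVerts {G : Type*} [Group G] (g : GarsideStructure G) (d : G)
    (L : List G) : List (G ⧸ Subgroup.zpowers g.Δ) :=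
  (List.range (L.length + 1)).map fun i => ((d * (L.take i).prod : G) : G ⧸ Subgroup.zpowers g.Δ)

end Artin

/-!
Part (a): by maximality of `-λ₀`, `x` divides the distinguished representative `d` of `x^k·v`
whenever `k > -λ₀`; then `x⁻¹d`, renormalised by a power of `Δ`, is the distinguished
representative of `x^(k-1)·v`, and induction on `j` gives `x^j ≼ d`.

Part (b): since `Δ^r` is central, left multiplication by `∂x = x⁻¹Δ^r` acts on vertices as `x⁻¹`.
Let `d₀` be the representative of `x^(-λ₀)·v`, so that `x ⋠ d₀`, and `e` that of `x⁻¹·x^(-λ₀)·v`,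
a renormalisation of `∂x·d₀`; then `a ⋠ e`. Inductively every `∂x^n·e` has infimum `0` and is not
divisible by the atom `a`, so it is the representative of `x^(-n-1)·x^(-λ₀)·v`. The induction rests
on two facts: `Δ ≼ ∂x·E` and `a ≼ ∂x·E` each force `a ≼ E`. They come from rigidity (`(a, a)` is
left-weighted, so `a ∨ ∂a = Δ`) and from the right normal forms of `x` and `∂x`, whose last
factors are `a` and `Δa⁻¹`.
-/

namespace GarsideStructure

variable {G : Type*} [Group G] (g : GarsideStructure G)

protected theorem le_trans {x y z : G} (hxy : g.le x y) (hyz : g.le y z) : g.le x z := by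
  unfold le at *
  convert g.P.mul_mem hxy hyz using 1
  group

protected theorem rle_trans {x y z : G} (hxy : g.rle x y) (hyz : g.rle y z) : g.rle x z := by
  unfold rle at *
  convert g.P.mul_mem hxy hyz using 1
  group

protected theorem rle_antisymm {x y : G} (hxy : g.rle x y) (hyx : g.rle y x) : x = y :=
  mul_inv_eq_one.mp (g.pos_antisymm _ hxy (by simpa [rle] using hyx))

theorem conj_delta_inv (z : G) : z ∈ g.P ↔ g.Δ * z * g.Δ⁻¹ ∈ g.P := by
  simpa [mul_assoc] using (g.conj_delta (g.Δ * z * g.Δ⁻¹)).symm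

theorem mem_iff_conj_zpow (k : ℤ) (z : G) : z ∈ g.P ↔ g.Δ ^ (-k) * z * g.Δ ^ k ∈ g.P := by
  induction k using Int.induction_on with
  | zero => simp
  | succ n ih => rw [ih, g.conj_delta]; group
  | pred n ih => rw [ih, g.conj_delta_inv]; group

theorem zpow_delta_mem {k : ℤ} (hk : 0 ≤ k) : g.Δ ^ k ∈ g.P := by
  lift k to ℕ using hk
  simpa using pow_mem g.delta_pos k

theorem zpow_delta_le_zpow_delta {m n : ℤ} (h : m ≤ n) : g.le (g.Δ ^ m) (g.Δ ^ n) := by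
  unfold le
  convert g.zpow_delta_mem (sub_nonneg.mpr h) using 1
  group

theorem simple_delta : g.Simple g.Δ := ⟨g.delta_pos, by simp [le]⟩

theorem delta_mul_inv_mem {s : G} (hs : g.Simple s) : g.Δ * s⁻¹ ∈ g.P := by
  rw [g.conj_delta]
  convert show s⁻¹ * g.Δ ∈ g.P from hs.2 using 1
  group

theorem prod_mem {L : List G} (h : ∀ s ∈ L, g.Simple s) : L.prod ∈ g.P :=
  g.P.list_prod_mem fun s hs => (h s hs).1

theorem wedge_mem {y z : G} (hy : y ∈ g.P) (hz : z ∈ g.P) : g.wedge y z ∈ g.P := by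
  simpa using g.le_wedge y z 1 (by simpa using hy) (by simpa using hz)

theorem delta_ne_one_of_simple {s : G} (hs : g.Simple s) (hs₁ : s ≠ 1) : g.Δ ≠ 1 := by
  intro hΔ
  exact hs₁ (g.pos_antisymm s hs.1 (by simpa [le, hΔ] using hs.2))

theorem delta_mul_ne_one (hΔ : g.Δ ≠ 1) {c : G} (hc : c ∈ g.P) : g.Δ * c ≠ 1 := fun h =>
  hΔ (g.pos_antisymm _ g.delta_pos (eq_inv_of_mul_eq_one_right h ▸ hc))

theorem zpow_delta_le_mul_zpow_iff (p : G) (k j : ℤ) :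
    g.le (g.Δ ^ (k + j)) (p * g.Δ ^ j) ↔ g.le (g.Δ ^ k) p := by
  unfold le
  rw [g.mem_iff_conj_zpow j ((g.Δ ^ k)⁻¹ * p)]
  group

theorem mem_of_isInf_zero {p : G} (h : g.IsInf p 0) : p ∈ g.P := by
  simpa [le] using h.1

theorem isInf_zero_of_not_delta_le {p : G} (hp : p ∈ g.P) (h : ¬ g.le g.Δ p) : g.IsInf p 0 := by
  refine ⟨by simpa [le] using hp, fun k hk => ?_⟩
  by_contra! hk₀
  exact h (g.le_trans (by simpa using g.zpow_delta_le_zpow_delta (by omega : (1 : ℤ) ≤ k)) hk)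

theorem isInf_mul_zpow {p : G} {κ : ℤ} (h : g.IsInf p κ) (j : ℤ) :
    g.IsInf (p * g.Δ ^ j) (κ + j) := by
  refine ⟨(g.zpow_delta_le_mul_zpow_iff p κ j).2 h.1, fun k hk => ?_⟩
  have := h.2 (k - j) ((g.zpow_delta_le_mul_zpow_iff p (k - j) j).1 (by simpa using hk))
  omega

theorem exists_bound_of_zpow_delta_le (hΔ : g.Δ ≠ 1) {p : G} (hp : p ∈ g.P) :
    ∃ N : ℤ, ∀ k : ℤ, g.le (g.Δ ^ k) p → k ≤ N := by
  obtain ⟨N, hN⟩ := g.noetherian _ (g.P.mul_mem g.delta_pos hp) (g.delta_mul_ne_one hΔ hp)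
  refine ⟨N, fun k (hk : (g.Δ ^ k)⁻¹ * p ∈ g.P) => ?_⟩
  by_contra! hNk
  lift k to ℕ using by omega
  -- `Δp = Δ^k · (Δ c)` with `c = Δ^{-k} p` positive: a factorisation of length `k + 1`
  have hlen := hN (List.replicate k g.Δ ++ [g.Δ * ((g.Δ ^ (k : ℤ))⁻¹ * p)]) ?_ ?_
  · simp only [List.length_append, List.length_replicate, List.length_singleton] at hlen
    omega
  · simp only [List.mem_append, List.mem_replicate, List.mem_singleton]
    rintro a (⟨-, rfl⟩ | rfl)
    exacts [⟨g.delta_pos, hΔ⟩, ⟨g.P.mul_mem g.delta_pos hk, g.delta_mul_ne_one hΔ hk⟩]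
  · simp only [List.prod_append, List.prod_replicate, List.prod_singleton]
    group

theorem exists_isInf (hΔ : g.Δ ≠ 1) {p : G} (hp : p ∈ g.P) : ∃ κ, 0 ≤ κ ∧ g.IsInf p κ := by
  have h₀ : g.le (g.Δ ^ (0 : ℤ)) p := by simpa [le] using hp
  obtain ⟨κ, hκ, hmax⟩ := Int.exists_greatest_of_bdd (g.exists_bound_of_zpow_delta_le hΔ hp) ⟨0, h₀⟩
  exact ⟨κ, hmax 0 h₀, hκ, hmax⟩

def IsDistinguishedRep (v : g.ALVertex) (d : G) : Prop :=
  g.IsInf d 0 ∧ (d : g.ALVertex) = v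

variable {g} in
theorem IsDistinguishedRep.unique {v : g.ALVertex} {d e : G} (hd : g.IsDistinguishedRep v d)
    (he : g.IsDistinguishedRep v e) : d = e := by
  obtain ⟨k, hk⟩ := Subgroup.mem_zpowers_iff.mp (QuotientGroup.eq.mp (hd.2.trans he.2.symm))
  have hek : e = d * g.Δ ^ k := by rw [hk]; group
  have hk' := g.isInf_mul_zpow hd.1 k
  rw [← hek, zero_add] at hk'
  obtain rfl : k = 0 := le_antisymm (he.1.2 k hk'.1) (hk'.2 0 he.1.1)
  simpa using hek.symm

theorem exists_isDistinguishedRep (hΔ : g.Δ ≠ 1) {p : G} (hp : p ∈ g.P) :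
    ∃ κ, 0 ≤ κ ∧ g.IsInf p κ ∧ g.IsDistinguishedRep p (p * g.Δ ^ (-κ)) := by
  obtain ⟨κ, hκ, hp⟩ := g.exists_isInf hΔ hp
  refine ⟨κ, hκ, hp, by simpa using g.isInf_mul_zpow hp (-κ), ?_⟩
  exact QuotientGroup.mk_mul_of_mem _ (Subgroup.zpow_mem_zpowers _ _)

theorem mk_mul (y d : G) : ((y * d : G) : g.ALVertex) = y • (d : g.ALVertex) := rfl

theorem le_mul_wedge_delta {s A B : G} (hs : g.Simple s) (hA : A ∈ g.P) (hB : B ∈ g.P)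
    (h : g.le s (A * B)) : g.le s (A * g.wedge g.Δ B) := by
  have hcB : g.le (A⁻¹ * g.vee A s) B := by
    have := g.vee_le A s (A * B) (by simpa using hB) h
    unfold le; convert this using 1; group
  have hcΔ : g.le (A⁻¹ * g.vee A s) g.Δ := by
    have hΔ : g.le g.Δ (A * g.Δ) := by
      unfold le; convert (g.conj_delta A).1 hA using 1; group
    have := g.vee_le A s (A * g.Δ) (by simpa using g.delta_pos) (g.le_trans hs.2 hΔ)
    unfold le; convert this using 1; group
  refine g.le_trans (g.right_le_vee A s) ?_
  unfold le; convert g.le_wedge _ _ _ hcΔ hcB using 1; group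

theorem rle_rwedge_delta_mul {S A B : G} (hS : g.rle g.Δ S) (hA : A ∈ g.P) (hB : B ∈ g.P)
    (h : g.rle (A * B) S) : g.rle (g.rwedge A g.Δ * B) S := by
  have hcA : g.rle A (g.rvee S B * B⁻¹) := by
    have := g.rvee_le S B (A * B) h (by simpa using hA)
    unfold rle; convert this using 1; group
  have hcΔ : g.rle g.Δ (g.rvee S B * B⁻¹) := by
    have hΔ : g.rle (g.Δ * B) g.Δ := (g.conj_delta_inv B).1 hB
    have := g.rvee_le S B (g.Δ * B) (g.rle_trans hΔ hS) (by simpa using g.delta_pos)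
    unfold rle; convert this using 1; group
  refine g.rle_trans ?_ (g.left_le_rvee S B)
  unfold rle; convert g.le_rwedge _ _ _ hcA hcΔ using 1; group

theorem rwedge_mul_delta {A B : G} (hA : A ∈ g.P) (hB : B ∈ g.P) :
    g.rwedge (A * B) g.Δ = g.rwedge (g.rwedge A g.Δ * B) g.Δ := by
  refine g.rle_antisymm (g.le_rwedge _ _ _ ?_ (g.rwedge_le_right _ g.Δ))
    (g.le_rwedge _ _ _ ?_ (g.rwedge_le_right _ g.Δ))
  · refine g.rle_trans ?_ (g.rwedge_le_left (g.rwedge A g.Δ * B) g.Δ)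
    unfold rle; convert g.rwedge_le_left A g.Δ using 1; group
  · exact g.rle_rwedge_delta_mul (g.rwedge_le_right _ g.Δ) hA hB (g.rwedge_le_left _ g.Δ)

theorem rwedge_mul_delta_of_rightWeighted {s t : G} (h : g.RightWeighted s t) :
    g.rwedge (s * t) g.Δ = t := by
  obtain ⟨hs, ht, hw⟩ := h
  have hWt : g.rwedge (s * t) g.Δ * t⁻¹ ∈ g.P :=
    g.le_rwedge _ _ _ (by simpa using hs.1) (g.delta_mul_inv_mem ht)
  have htW : (g.rwedge (s * t) g.Δ * t⁻¹)⁻¹ ∈ g.P := by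
    have := g.le_rwedge s (g.Δ * t⁻¹) (g.rwedge (s * t) g.Δ * t⁻¹)
      (by convert g.rwedge_le_left (s * t) g.Δ using 1; group)
      (by convert g.rwedge_le_right (s * t) g.Δ using 1; group)
    rwa [hw, one_mul] at this
  exact mul_inv_eq_one.mp (g.pos_antisymm _ hWt htW)

theorem rwedge_prod_delta {L : List G} {ζ : G} (hs : ∀ s ∈ L, g.Simple s)
    (hc : L.IsChain g.RightWeighted) (hζ : L.getLast? = some ζ) : g.rwedge L.prod g.Δ = ζ := by
  induction L using List.reverseRecOn generalizing ζ with
  | nil => simp at hζ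
  | append_singleton L ζ' ih =>
    obtain rfl : ζ' = ζ := by simpa using hζ
    rcases L.eq_nil_or_concat' with rfl | ⟨L', ξ, rfl⟩
    · simp only [List.nil_append, List.prod_singleton]
      exact g.rle_antisymm (g.le_rwedge _ _ _ (by simp) (g.delta_mul_inv_mem (hs ζ' (by simp))))
        (g.rwedge_le_left ζ' g.Δ)
    · have hL : ∀ s ∈ L' ++ [ξ], g.Simple s := fun s h => hs s (List.mem_append_left _ h)
      have hLc := (List.isChain_append.mp hc).1
      have hξζ : g.RightWeighted ξ ζ' := (List.isChain_append.mp hc).2.2 ξ (by simp) ζ' (by simp)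
      rw [List.prod_append, List.prod_singleton, g.rwedge_mul_delta (g.prod_mem hL)
        (hs ζ' (by simp)).1, ih (ζ := ξ) hL hLc (by simp), g.rwedge_mul_delta_of_rightWeighted hξζ]

theorem rle_conj_iff {x y : G} : g.rle (g.Δ * x * g.Δ⁻¹) (g.Δ * y * g.Δ⁻¹) ↔ g.rle x y := by
  unfold rle
  rw [g.conj_delta_inv (x * y⁻¹)]
  group

theorem rwedge_comm (y z : G) : g.rwedge y z = g.rwedge z y :=
  g.rle_antisymm (g.le_rwedge y z _ (g.rwedge_le_right z y) (g.rwedge_le_left z y))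
    (g.le_rwedge z y _ (g.rwedge_le_right y z) (g.rwedge_le_left y z))

theorem rwedge_conj (u v : G) :
    g.rwedge (g.Δ * u * g.Δ⁻¹) (g.Δ * v * g.Δ⁻¹) = g.Δ * g.rwedge u v * g.Δ⁻¹ := by
  set W := g.rwedge (g.Δ * u * g.Δ⁻¹) (g.Δ * v * g.Δ⁻¹)
  have hW : g.Δ * (g.Δ⁻¹ * W * g.Δ) * g.Δ⁻¹ = W := by group
  refine g.rle_antisymm (g.le_rwedge _ _ _ (g.rle_conj_iff.2 (g.rwedge_le_left u v))
    (g.rle_conj_iff.2 (g.rwedge_le_right u v))) ?_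
  rw [← hW, g.rle_conj_iff]
  refine g.le_rwedge u v _ (g.rle_conj_iff.1 ?_) (g.rle_conj_iff.1 ?_) <;> rw [hW]
  exacts [g.rwedge_le_left _ _, g.rwedge_le_right _ _]

theorem simple_conj {s : G} (hs : g.Simple s) : g.Simple (g.Δ * s * g.Δ⁻¹) := by
  refine ⟨(g.conj_delta_inv s).1 hs.1, ?_⟩
  unfold le
  convert (g.conj_delta_inv _).1 hs.2 using 1
  group

theorem simple_delta_mul_inv {s : G} (hs : g.Simple s) : g.Simple (g.Δ * s⁻¹) :=
  ⟨g.delta_mul_inv_mem hs, by simpa [le] using hs.1⟩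

theorem rightWeighted_conj {s t : G} (h : g.RightWeighted s t) :
    g.RightWeighted (g.Δ * s * g.Δ⁻¹) (g.Δ * t * g.Δ⁻¹) := by
  refine ⟨g.simple_conj h.1, g.simple_conj h.2.1, ?_⟩
  rw [show g.Δ * (g.Δ * t * g.Δ⁻¹)⁻¹ = g.Δ * (g.Δ * t⁻¹) * g.Δ⁻¹ by group, g.rwedge_conj, h.2.2]
  group

theorem rightWeighted_complement {s t : G} (h : g.RightWeighted s t) :
    g.RightWeighted (g.Δ * (g.Δ * t⁻¹) * g.Δ⁻¹) (g.Δ * s⁻¹) := by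
  refine ⟨g.simple_conj (g.simple_delta_mul_inv h.2.1), g.simple_delta_mul_inv h.1, ?_⟩
  rw [show g.Δ * (g.Δ * s⁻¹)⁻¹ = g.Δ * s * g.Δ⁻¹ by group, g.rwedge_conj, g.rwedge_comm, h.2.2]
  group

def complList : List G → List G
  | [] => []
  | s :: L => (complList L).map (fun z => g.Δ * z * g.Δ⁻¹) ++ [g.Δ * s⁻¹]

theorem prod_complList (L : List G) : (g.complList L).prod = g.Δ ^ L.length * L.prod⁻¹ := by
  induction L with
  | nil => simp [complList]
  | cons s L ih =>
    have hconj : ∀ L' : List G, (L'.map (fun z => g.Δ * z * g.Δ⁻¹)).prod = g.Δ * L'.prod * g.Δ⁻¹ :=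
      fun L' => by induction L' <;> simp_all [mul_assoc]
    simp only [complList, List.prod_append, hconj, ih, List.prod_cons, List.prod_nil, mul_one,
      List.length_cons, pow_succ']
    group

theorem getLast?_complList_cons (s : G) (L : List G) :
    (g.complList (s :: L)).getLast? = some (g.Δ * s⁻¹) := by
  simp [complList]

theorem simple_of_mem_complList {L : List G} (h : ∀ s ∈ L, g.Simple s) :
    ∀ z ∈ g.complList L, g.Simple z := by
  induction L with
  | nil => simp [complList]
  | cons s L ih =>
    simp only [complList, List.mem_append, List.mem_map, List.mem_singleton]
    rintro z (⟨w, hw, rfl⟩ | rfl)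
    · exact g.simple_conj (ih (fun u hu => h u (by simp [hu])) w hw)
    · exact g.simple_delta_mul_inv (h s (by simp))

theorem isChain_complList {L : List G} (h : ∀ s ∈ L, g.Simple s)
    (hc : L.IsChain g.RightWeighted) : (g.complList L).IsChain g.RightWeighted := by
  induction L with
  | nil => simp [complList]
  | cons s L ih =>
    rw [complList, List.isChain_append]
    refine ⟨(List.isChain_map _).2 ((ih (fun u hu => h u (by simp [hu])) hc.tail).imp
      fun _ _ => g.rightWeighted_conj), by simp, ?_⟩
    rintro ξ hξ _ ⟨⟩
    cases L with
    | nil => simp [complList] at hξ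
    | cons t L =>
      rw [List.getLast?_map, g.getLast?_complList_cons] at hξ
      obtain rfl := Option.some.inj hξ
      exact g.rightWeighted_complement (List.isChain_cons_cons.mp hc).1

theorem delta_pow_mul_prod_inv_mem {L : List G} (h : ∀ s ∈ L, g.Simple s) :
    g.Δ ^ L.length * L.prod⁻¹ ∈ g.P := by
  rw [← g.prod_complList]
  exact g.prod_mem (g.simple_of_mem_complList h)

theorem inv_mul_delta_le_prod_inv_mul_zpow (a : G) {L : List G} (h : ∀ s ∈ L, g.Simple s) :
    g.le (a⁻¹ * g.Δ) ((L ++ [a]).prod⁻¹ * g.Δ ^ ((L.length : ℤ) + 1)) := by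
  have := (g.mem_iff_conj_zpow ((L.length : ℤ) + 1) _).1 (g.delta_pow_mul_prod_inv_mem h)
  unfold le
  convert this using 1
  simp only [List.prod_append, List.prod_singleton]
  group

theorem zpow_le_of_forall_le (hΔ : g.Δ ≠ 1) {x : G} {w : g.ALVertex}
    (h : ∀ k : ℤ, 1 ≤ k → ∀ d, g.IsDistinguishedRep (x ^ k • w) d → g.le x d)
    (j : ℤ) (hj : 1 ≤ j) : ∀ d, g.IsDistinguishedRep (x ^ j • w) d → g.le (x ^ j) d := by
  induction j, hj using Int.leInduction with
  | base => simpa using h 1 le_rfl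
  | succ j hj ih =>
    intro d hd
    obtain ⟨κ, hκ, -, hrep⟩ := g.exists_isDistinguishedRep hΔ (h (j + 1) (by omega) d hd)
    have hx := ih _ ⟨hrep.1, by
      rw [hrep.2, g.mk_mul, hd.2, smul_smul, ← zpow_neg_one, ← zpow_add]; congr 2; omega⟩
    unfold le at hx ⊢
    convert g.P.mul_mem hx (g.zpow_delta_mem hκ) using 1
    group

end GarsideStructure

namespace GarsideStructure.SpecialElement

variable {G : Type*} [Group G] {g : GarsideStructure G} (sp : g.SpecialElement)

def compl : G := sp.x⁻¹ * g.Δ ^ (sp.l.length : ℤ)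

theorem commute_delta_pow (z : G) : Commute (g.Δ ^ (sp.l.length : ℤ)) z :=
  (Subgroup.mem_center_iff.mp sp.delta_pow_central z).symm

theorem compl_eq : sp.compl = g.Δ ^ (sp.l.length : ℤ) * sp.x⁻¹ :=
  (sp.commute_delta_pow sp.x⁻¹).symm.eq

theorem mk_compl_mul (e : G) : ((sp.compl * e : G) : g.ALVertex) = sp.x⁻¹ • (e : g.ALVertex) := by
  rw [compl, mul_assoc, (sp.commute_delta_pow e).eq, ← mul_assoc,
    QuotientGroup.mk_mul_of_mem _ (Subgroup.zpow_mem_zpowers _ _), g.mk_mul]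

theorem simple_of_mem {s : G} (hs : s ∈ sp.l) : g.Simple s := (sp.rnf.1 s hs).1

theorem l_eq_cons : sp.l = sp.a :: sp.l.tail := by
  have := sp.head_a
  revert this
  cases sp.l <;> simp_all

theorem l_eq_dropLast_append : sp.l = sp.l.dropLast ++ [sp.a] := by
  rw [← Option.some_inj.mp ((List.getLast?_eq_some_getLast sp.nonempty).symm.trans sp.last_a)]
  exact (List.dropLast_append_getLast sp.nonempty).symm

theorem simple_a : g.Simple sp.a := sp.simple_of_mem (sp.l_eq_cons ▸ List.mem_cons_self)

theorem delta_ne_one (sp : g.SpecialElement) : g.Δ ≠ 1 :=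
  g.delta_ne_one_of_simple sp.simple_a sp.atom_a.2.1

theorem x_mem : sp.x ∈ g.P := sp.prod_eq ▸ g.prod_mem fun _ => sp.simple_of_mem

theorem prod_complList : (g.complList sp.l).prod = sp.compl := by
  rw [g.prod_complList, compl_eq, sp.prod_eq, zpow_natCast]

theorem compl_mem : sp.compl ∈ g.P :=
  sp.prod_complList ▸ g.prod_mem (g.simple_of_mem_complList fun _ => sp.simple_of_mem)

theorem rwedge_x_delta : g.rwedge sp.x g.Δ = sp.a :=
  sp.prod_eq ▸ g.rwedge_prod_delta (fun _ => sp.simple_of_mem) sp.rnf.2.1 sp.last_a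

theorem rwedge_compl_delta : g.rwedge sp.compl g.Δ = g.Δ * sp.a⁻¹ := by
  rw [← sp.prod_complList]
  refine g.rwedge_prod_delta (g.simple_of_mem_complList fun _ => sp.simple_of_mem)
    (g.isChain_complList (fun _ => sp.simple_of_mem) sp.rnf.2.1) ?_
  rw [sp.l_eq_cons, g.getLast?_complList_cons]

theorem inv_mul_delta_le_compl : g.le (sp.a⁻¹ * g.Δ) sp.compl := by
  have h := g.inv_mul_delta_le_prod_inv_mul_zpow sp.a
    fun _ hs => sp.simple_of_mem (List.dropLast_subset _ hs)
  rwa [← sp.l_eq_dropLast_append, sp.prod_eq, show (sp.l.dropLast.length : ℤ) + 1 = sp.l.length by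
    conv_rhs => rw [sp.l_eq_dropLast_append]
    simp] at h

theorem not_a_le_inv_mul_delta : ¬ g.le sp.a (sp.a⁻¹ * g.Δ) := fun h => by
  have := g.le_wedge (sp.a⁻¹ * g.Δ) sp.a sp.a h (by simp)
  rw [sp.rigid.2.2, mul_one] at this
  exact sp.atom_a.2.1 (g.pos_antisymm _ sp.atom_a.1 this)

theorem vee_a_inv_mul_delta : g.vee sp.a (sp.a⁻¹ * g.Δ) = g.Δ := by
  obtain ⟨z, hz⟩ : ∃ z, g.vee sp.a (sp.a⁻¹ * g.Δ) = z := ⟨_, rfl⟩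
  have hzΔ : z⁻¹ * g.Δ ∈ g.P := hz ▸ g.vee_le _ _ _ sp.simple_a.2 (by
    convert (g.conj_delta _).1 sp.atom_a.1 using 1; group)
  have hz' : (sp.a⁻¹ * g.Δ)⁻¹ * z ∈ g.P := hz ▸ g.right_le_vee _ _
  -- `(∂a)⁻¹ z` is a prefix of the atom `τ(a) = (∂a)⁻¹Δ`; it is not `1` by rigidity
  rcases sp.atom_a.2.2 _ _ ((g.conj_delta_inv _).1 hz') ((g.conj_delta_inv _).1 hzΔ) (by group)
    with h | h
  · have := hz ▸ g.left_le_vee sp.a (sp.a⁻¹ * g.Δ)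
    rw [← inv_mul_eq_one.mp (mul_eq_left.mp (mul_inv_eq_one.mp h))] at this
    exact absurd this sp.not_a_le_inv_mul_delta
  · exact hz.trans (inv_mul_eq_one.mp (mul_eq_left.mp (mul_inv_eq_one.mp h)))

theorem delta_le_of_a_le {w : G} (haw : g.le sp.a w) (hΔ : g.le g.Δ (sp.x * w)) :
    g.le g.Δ w := by
  have hw : w ∈ g.P := by simpa using g.P.mul_mem sp.atom_a.1 haw
  obtain ⟨t, ht, htw, hat, hxt⟩ : ∃ t, g.Simple t ∧ g.le t w ∧ g.le sp.a t ∧ g.le g.Δ (sp.x * t) :=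
    ⟨g.wedge g.Δ w, ⟨g.wedge_mem g.delta_pos hw, g.wedge_le_left _ _⟩, g.wedge_le_right _ _,
      g.le_wedge _ _ _ sp.simple_a.2 haw, g.le_mul_wedge_delta g.simple_delta sp.x_mem hw hΔ⟩
  -- `Δt⁻¹` is a simple suffix of `x`, hence a suffix of its last factor, the atom `a`
  have hsuff : sp.a * (g.Δ * t⁻¹)⁻¹ ∈ g.P := by
    rw [← sp.rwedge_x_delta]
    refine g.le_rwedge _ _ _ ?_ ?_
    · convert (g.conj_delta_inv _).1 hxt using 1; group
    · convert (g.conj_delta_inv t).1 ht.1 using 1; group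
  rcases sp.atom_a.2.2 _ _ hsuff (g.delta_mul_inv_mem ht) (by group) with h | h
  · refine absurd ?_ sp.not_a_le_inv_mul_delta
    rwa [show t = sp.a⁻¹ * g.Δ by rw [mul_inv_eq_one.mp h]; group] at hat
  · rwa [← mul_inv_eq_one.mp h] at htw

theorem a_le_of_le_mul_delta_pow {t : G} (ht : g.Simple t)
    (h : g.le sp.x (t * g.Δ ^ ((sp.l.length : ℤ) - 1))) : g.le sp.a t := by
  -- `S = τ^{r-1}(∂t)` is a simple suffix of `∂x`, hence of its last factor `Δa⁻¹`
  have hS := g.le_rwedge sp.compl g.Δ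
    (g.Δ ^ (1 - (sp.l.length : ℤ)) * t⁻¹ * g.Δ ^ (sp.l.length : ℤ))
    (by unfold le at h; convert h using 1; rw [compl]; group)
    (by convert (g.mem_iff_conj_zpow ((sp.l.length : ℤ) - 1) t).1 ht.1 using 1; group)
  rw [sp.rwedge_compl_delta] at hS
  unfold le
  rw [g.mem_iff_conj_zpow ((sp.l.length : ℤ) - 1)]
  convert hS using 1
  have hc := (sp.commute_delta_pow sp.a⁻¹).inv_left.eq
  calc _ = g.Δ * ((g.Δ ^ (sp.l.length : ℤ))⁻¹ * sp.a⁻¹) * t * g.Δ ^ ((sp.l.length : ℤ) - 1) := by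
        group
    _ = _ := by rw [hc]; group

theorem a_le_of_delta_le_compl_mul {E : G} (hE : E ∈ g.P) (h : g.le g.Δ (sp.compl * E)) :
    g.le sp.a E := by
  have ht : g.Simple (g.wedge g.Δ E) := ⟨g.wedge_mem g.delta_pos hE, g.wedge_le_left _ _⟩
  have hΔ := g.le_mul_wedge_delta g.simple_delta sp.compl_mem hE h
  refine g.le_trans (sp.a_le_of_le_mul_delta_pow ht ?_) (g.wedge_le_right _ _)
  unfold le at hΔ ⊢
  rw [compl_eq] at hΔ
  convert (g.mem_iff_conj_zpow ((sp.l.length : ℤ) - 1) _).1 hΔ using 1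
  group

theorem a_le_of_a_le_compl_mul {E : G} (hE : E ∈ g.P) (h : g.le sp.a (sp.compl * E)) :
    g.le sp.a E := by
  have h' : g.le (sp.a⁻¹ * g.Δ) (sp.compl * E) :=
    g.le_trans sp.inv_mul_delta_le_compl (by simpa [le] using hE)
  exact sp.a_le_of_delta_le_compl_mul hE (sp.vee_a_inv_mul_delta ▸ g.vee_le _ _ _ h h')

theorem isInf_zero_and_not_a_le_compl_mul {e : G} (he : g.IsInf e 0) (hae : ¬ g.le sp.a e) :
    g.IsInf (sp.compl * e) 0 ∧ ¬ g.le sp.a (sp.compl * e) := by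
  have he' := g.mem_of_isInf_zero he
  exact ⟨g.isInf_zero_of_not_delta_le (g.P.mul_mem sp.compl_mem he')
    fun h => hae (sp.a_le_of_delta_le_compl_mul he' h),
    fun h => hae (sp.a_le_of_a_le_compl_mul he' h)⟩

theorem exists_isDistinguishedRep_inv_smul {d₀ : G} (hd₀ : g.IsInf d₀ 0)
    (hx : ¬ g.le sp.x d₀) :
    ∃ e, g.IsDistinguishedRep (sp.x⁻¹ • (d₀ : g.ALVertex)) e ∧ ¬ g.le sp.a e := by
  have hd₀' := g.mem_of_isInf_zero hd₀
  obtain ⟨κ, -, hκ, he⟩ :=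
    g.exists_isDistinguishedRep sp.delta_ne_one (g.P.mul_mem sp.compl_mem hd₀')
  rw [sp.mk_compl_mul] at he
  refine ⟨_, he, fun ha => ?_⟩
  have hκr : κ + 1 ≤ sp.l.length := by
    by_contra! hrκ
    refine hx ?_
    have := g.le_trans (g.zpow_delta_le_zpow_delta (by omega : (sp.l.length : ℤ) ≤ κ)) hκ.1
    simpa [le, compl_eq, mul_assoc] using this
  have hxe : sp.x * (sp.compl * d₀ * g.Δ ^ (-κ)) = d₀ * g.Δ ^ ((sp.l.length : ℤ) - κ) := by
    rw [compl, mul_assoc sp.x⁻¹, (sp.commute_delta_pow d₀).eq]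
    group
  have hΔ : g.le g.Δ (sp.x * (sp.compl * d₀ * g.Δ ^ (-κ))) := by
    unfold le
    convert g.P.mul_mem ((g.conj_delta d₀).1 hd₀') (g.zpow_delta_mem (by omega :
      0 ≤ (sp.l.length : ℤ) - κ - 1)) using 1
    rw [hxe]
    group
  have := he.1.2 1 (by simpa using sp.delta_le_of_a_le ha hΔ)
  omega

theorem exists_isDistinguishedRep_zpow_neg_smul {d₀ : G} (hd₀ : g.IsInf d₀ 0)
    (hx : ¬ g.le sp.x d₀) (n : ℤ) (hn : 0 ≤ n) :
    ∃ e, g.IsDistinguishedRep (sp.x ^ (-(n + 1)) • (d₀ : g.ALVertex)) e ∧ ¬ g.le sp.a e ∧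
      g.le (sp.compl ^ n) e := by
  induction n, hn using Int.leInduction with
  | base =>
    obtain ⟨e, he, hae⟩ := sp.exists_isDistinguishedRep_inv_smul hd₀ hx
    exact ⟨e, by simpa using he, hae, by simpa [le] using g.mem_of_isInf_zero he.1⟩
  | succ n hn ih =>
    obtain ⟨e, he, hae, hle⟩ := ih
    obtain ⟨he', hae'⟩ := sp.isInf_zero_and_not_a_le_compl_mul he.1 hae
    refine ⟨_, ⟨he', ?_⟩, hae', ?_⟩
    · rw [sp.mk_compl_mul, he.2, smul_smul, ← zpow_neg_one, ← zpow_add]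
      congr 2
      ring
    · unfold le at hle ⊢
      convert hle using 1
      group

end GarsideStructure.SpecialElement

theorem artin_axis_projection_prefixes_general {B : Type*} (M : CoxeterMatrix B)
    (gs : GarsideStructure (ArtinGroup M))
    (sp : gs.SpecialElement)
    (v : ArtinGroup M ⧸ Subgroup.zpowers gs.Δ) (lam : ℤ)
    (hlam : gs.IsAxisProj sp.x v lam) :
    (∀ j : ℤ, 1 ≤ j → ∀ d : ArtinGroup M, gs.IsInf d 0 →
        (d : ArtinGroup M ⧸ Subgroup.zpowers gs.Δ) = sp.x ^ (-lam + j) • v →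
        gs.le (sp.x ^ j) d) ∧
    (∀ j : ℤ, 2 ≤ j → ∀ d : ArtinGroup M, gs.IsInf d 0 →
        (d : ArtinGroup M ⧸ Subgroup.zpowers gs.Δ) = sp.x ^ (-lam - j) • v →
        gs.le ((sp.x⁻¹ * gs.Δ ^ (sp.l.length : ℤ)) ^ (j - 1)) d) := by
  obtain ⟨⟨d₀, hd₀, hd₀v, hxd₀⟩, hmax⟩ := hlam
  have hshift (k : ℤ) : sp.x ^ (-lam + k) • v = sp.x ^ k • sp.x ^ (-lam) • v := by
    rw [smul_smul, ← zpow_add, add_comm]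
  refine ⟨fun j hj d hd hdv => ?_, fun j hj d hd hdv => ?_⟩
  · refine gs.zpow_le_of_forall_le sp.delta_ne_one (fun k hk d' hd' => ?_) j hj d
      ⟨hd, hdv.trans (hshift j)⟩
    by_contra hxd'
    have := hmax (-lam + k) ⟨d', hd'.1, hd'.2.trans (hshift k).symm, hxd'⟩
    omega
  · obtain ⟨e, he, -, hle⟩ := sp.exists_isDistinguishedRep_zpow_neg_smul hd₀ hxd₀ (j - 1) (by omega)
    have hdv' : (d : gs.ALVertex) = sp.x ^ (-(j - 1 + 1)) • (d₀ : gs.ALVertex) := by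
      rw [hdv, hd₀v, sub_eq_add_neg, hshift]
      congr 2
      ring
    obtain rfl : e = d := he.unique ⟨hd, hdv'⟩
    exact hle

/-- Lemma "L:Partial": for a vertex `v` with axis projection `λ₀`:
(a) for `j ≥ 1`, `x_G^j` is a prefix of the distinguished representative of `x_G^{−λ₀+j}·v`;
(b) for `j ≥ 2`, `(∂x_G)^{j−1}` is a prefix of the distinguished representative of
`x_G^{−λ₀−j}·v`. -/
theorem artin_axis_projection_prefixes {B : Type*} (M : CoxeterMatrix B)
    (hirr : M.IsIrreducible) (hsph : M.IsSpherical) (hedge : M.HasEdge)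
    (gs : GarsideStructure (ArtinGroup M)) (hcl : IsClassicalGarside M gs)
    (sp : gs.SpecialElement)
    (v : ArtinGroup M ⧸ Subgroup.zpowers gs.Δ) (lam : ℤ)
    (hlam : gs.IsAxisProj sp.x v lam) :
    (∀ j : ℤ, 1 ≤ j → ∀ d : ArtinGroup M, gs.IsInf d 0 →
        (d : ArtinGroup M ⧸ Subgroup.zpowers gs.Δ) = sp.x ^ (-lam + j) • v →
        gs.le (sp.x ^ j) d) ∧
    (∀ j : ℤ, 2 ≤ j → ∀ d : ArtinGroup M, gs.IsInf d 0 →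
        (d : ArtinGroup M ⧸ Subgroup.zpowers gs.Δ) = sp.x ^ (-lam - j) • v →
        gs.le ((sp.x⁻¹ * gs.Δ ^ (sp.l.length : ℤ)) ^ (j - 1)) d) :=
  artin_axis_projection_prefixes_general M gs sp v lam hlam
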